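/- arXiv:2502.00794 — 2 statements merged into one kernel-verified Lean document; each statement's English description precedes it below -/
import Mathlib

section
/- Let f : Ω → X be a function into a metric space X and let (fₙ) be a sequence of functions with finite range such that m*(d(f, fₙ) > 2⁻ⁿ) ≤ 2⁻⁽ⁿ⁺¹⁾ for all n, where m* is the outer measure of a finitely additive probability m on an algebra of subsets of Ω. Then the countable set K = ⋃ₙ fₙ[Ω] has the property that for every ε > 0, m*({ω : dist(f(ω), K) > ε}) = 0. -/
/-!
Each `fₙ ω` lies in `K`, so `dist(f ω, K) ≤ d(f ω, fₙ ω)`. Hence once `2⁻ⁿ ≤ ε`, the set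
`{dist(f, K) > ε}` is contained in `{d(f, fₙ) > 2⁻ⁿ}`, whose outer measure is at most
`2⁻⁽ⁿ⁺¹⁾`. Letting `n → ∞` and using monotonicity of `m*` gives outer measure zero.
-/

open Filter Topology

/-- The outer measure `m*` of the paper. -/
noncomputable def outerContent {Ω : Type*} (𝒜 : Set (Set Ω)) (m : Set Ω → ℝ) (E : Set Ω) : ℝ :=
  sInf {r | ∃ A ∈ 𝒜, E ⊆ A ∧ m A = r}

section outerContent

variable {Ω : Type*} {𝒜 : Set (Set Ω)} {m : Set Ω → ℝ}

lemma outerContent_nonneg (hnonneg : ∀ A ∈ 𝒜, 0 ≤ m A) (E : Set Ω) :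
    0 ≤ outerContent 𝒜 m E :=
  Real.sInf_nonneg <| by
    rintro r ⟨A, hA, -, rfl⟩
    exact hnonneg A hA

lemma outerContent_mono (huniv : Set.univ ∈ 𝒜) (hnonneg : ∀ A ∈ 𝒜, 0 ≤ m A)
    {E F : Set Ω} (hEF : E ⊆ F) : outerContent 𝒜 m E ≤ outerContent 𝒜 m F := by
  apply csInf_le_csInf
  · refine ⟨0, ?_⟩
    rintro r ⟨A, hA, -, rfl⟩
    exact hnonneg A hA
  · exact ⟨m Set.univ, Set.univ, huniv, Set.subset_univ F, rfl⟩
  · rintro r ⟨A, hA, hFA, rfl⟩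
    exact ⟨A, hA, hEF.trans hFA, rfl⟩

end outerContent

lemma setOf_lt_infDist_iUnion_range_subset {Ω X ι : Type*} [PseudoMetricSpace X]
    {f : Ω → X} {g : ι → Ω → X} {r ε : ℝ} (hr : r ≤ ε) (i : ι) :
    {ω | ε < Metric.infDist (f ω) (⋃ j, Set.range (g j))} ⊆ {ω | r < dist (f ω) (g i ω)} :=
  fun ω hω => hr.trans_lt <| hω.trans_le <|
    Metric.infDist_le_dist_of_mem (Set.mem_iUnion.2 ⟨i, Set.mem_range_self ω⟩)

theorem stmt13_general {Ω X : Type*} [MetricSpace X] (𝒜 : Set (Set Ω)) (m : Set Ω → ℝ)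
    (huniv : Set.univ ∈ 𝒜)
    (hnonneg : ∀ A ∈ 𝒜, 0 ≤ m A)
    (mStar : Set Ω → ℝ)
    (hmStar : ∀ E : Set Ω, mStar E = sInf {r | ∃ A ∈ 𝒜, E ⊆ A ∧ m A = r})
    (f : Ω → X) (fn : ℕ → Ω → X)
    (happrox : ∀ n : ℕ,
      mStar {ω | (2 : ℝ)⁻¹ ^ n < dist (f ω) (fn n ω)} ≤ (2 : ℝ)⁻¹ ^ (n + 1)) :
    ∀ ε : ℝ, 0 < ε →
      mStar {ω | ε < Metric.infDist (f ω) (⋃ n, Set.range (fn n))} = 0 := by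
  intro ε hε
  obtain rfl : mStar = outerContent 𝒜 m := funext hmStar
  have hpow : Tendsto (fun n : ℕ => (2 : ℝ)⁻¹ ^ n) atTop (𝓝 0) :=
    tendsto_pow_atTop_nhds_zero_of_lt_one (by norm_num) (by norm_num)
  refine le_antisymm ?_ (outerContent_nonneg hnonneg _)
  refine ge_of_tendsto (hpow.comp (tendsto_add_atTop_nat 1)) ?_
  filter_upwards [hpow.eventually (ge_mem_nhds hε)] with n hn
  exact (outerContent_mono huniv hnonneg (setOf_lt_infDist_iUnion_range_subset hn n)).trans
    (happrox n)

/-- The observation at the start of Section 4: if `(fₙ)` is a sequence of finite-range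
functions with `m*(d(f, fₙ) > 2⁻ⁿ) ≤ 2⁻⁽ⁿ⁺¹⁾` (where `m*` is the outer measure induced
by a finitely additive probability `m` on an algebra `𝒜`), then the countable set
`K = ⋃ₙ fₙ[Ω]` satisfies `m*({dist(f, K) > ε}) = 0` for every `ε > 0`, i.e. `K` is an
`m`-cover of `f`. -/
theorem stmt13 {Ω X : Type*} [MetricSpace X] (𝒜 : Set (Set Ω)) (m : Set Ω → ℝ)
    (huniv : Set.univ ∈ 𝒜) (hcompl : ∀ A ∈ 𝒜, Aᶜ ∈ 𝒜)
    (hunion : ∀ A ∈ 𝒜, ∀ B ∈ 𝒜, A ∪ B ∈ 𝒜)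
    (hnonneg : ∀ A ∈ 𝒜, 0 ≤ m A) (hone : m Set.univ = 1)
    (hadd : ∀ A ∈ 𝒜, ∀ B ∈ 𝒜, Disjoint A B → m (A ∪ B) = m A + m B)
    (mStar : Set Ω → ℝ)
    (hmStar : ∀ E : Set Ω, mStar E = sInf {r | ∃ A ∈ 𝒜, E ⊆ A ∧ m A = r})
    (f : Ω → X) (fn : ℕ → Ω → X)
    (hfinite : ∀ n, (Set.range (fn n)).Finite)
    (happrox : ∀ n : ℕ,
      mStar {ω | (2 : ℝ)⁻¹ ^ n < dist (f ω) (fn n ω)} ≤ (2 : ℝ)⁻¹ ^ (n + 1)) :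
    ∀ ε : ℝ, 0 < ε →
      mStar {ω | ε < Metric.infDist (f ω) (⋃ n, Set.range (fn n))} = 0 :=
  stmt13_general 𝒜 m huniv hnonneg mStar hmStar f fn happrox
end

section
/- Let X be a metric space, m a finitely additive probability on an algebra 𝒜 of subsets of Ω, f : Ω → X, and h : X → ℝ bounded and uniformly continuous. Suppose K ⊆ X satisfies: for every ε > 0 and δ > 0 there exists A ∈ 𝒜 with m(A) > 1 − δ and f[A] contained in the ε-neighborhood of K. Then ∫* h(f) dm ≥ inf_{z ∈ K} h(z), where ∫* denotes the upper (finitely additive) integral. -/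
/-!
Let `L = inf_K h` and let `g = ∑ cᵢ 1_{Bᵢ}` be a simple function dominating `h ∘ f`. Choose
`A ∈ 𝒜` with `m Aᶜ < δ` on which `f` stays within `η` of `K`; by uniform continuity
`h ∘ f ≥ L - ε` on `A`, while `h ∘ f ≥ -M` everywhere. The elementary integral is monotone
for a nonnegative finitely additive `m` (refine all sets involved to the atoms of the finite
algebra they generate), so `∑ cᵢ m(Bᵢ) ≥ (L - ε) m A - M m Aᶜ ≥ L - ε - (L + M) δ`.
-/

open MeasureTheory

section

variable {Ω : Type*} {𝒜 : Set (Set Ω)} {m : Set Ω → ℝ}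

def IsFinitelyAdditiveOn (𝒜 : Set (Set Ω)) (m : Set Ω → ℝ) : Prop :=
  ∀ A ∈ 𝒜, ∀ B ∈ 𝒜, Disjoint A B → m (A ∪ B) = m A + m B

namespace IsFinitelyAdditiveOn

theorem apply_empty (hm : IsFinitelyAdditiveOn 𝒜 m) (h𝒜 : IsSetAlgebra 𝒜) : m ∅ = 0 := by
  simpa using hm ∅ h𝒜.empty_mem ∅ h𝒜.empty_mem (Set.disjoint_empty ∅)

theorem apply_add_apply_compl (hm : IsFinitelyAdditiveOn 𝒜 m) (h𝒜 : IsSetAlgebra 𝒜)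
    {A : Set Ω} (hA : A ∈ 𝒜) : m A + m Aᶜ = m Set.univ := by
  rw [← hm A hA Aᶜ (h𝒜.compl_mem hA) disjoint_compl_right, Set.union_compl_self]

theorem apply_biUnion (hm : IsFinitelyAdditiveOn 𝒜 m) (h𝒜 : IsSetAlgebra 𝒜) {ι : Type*}
    (S : Finset ι) {E : ι → Set Ω} (hE : ∀ i ∈ S, E i ∈ 𝒜)
    (hdisj : (S : Set ι).PairwiseDisjoint E) :
    m (⋃ i ∈ S, E i) = ∑ i ∈ S, m (E i) := by
  classical
  induction S using Finset.induction_on with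
  | empty => simpa using hm.apply_empty h𝒜
  | insert a S ha ih =>
    have hES : ∀ i ∈ S, E i ∈ 𝒜 := fun i hi => hE i (Finset.mem_insert_of_mem hi)
    rw [Finset.set_biUnion_insert, Finset.sum_insert ha,
      ← ih hES (hdisj.subset (by simp))]
    refine hm _ (hE a (Finset.mem_insert_self a S)) _ (h𝒜.biUnion_mem S hES) ?_
    refine Set.disjoint_iUnion₂_right.2 fun i hi => hdisj (by simp) (by simp [hi]) ?_
    exact fun hai => ha (hai ▸ hi)

end IsFinitelyAdditiveOn

section Atoms

variable {ι : Type*} (B : ι → Set Ω)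

def atom (s : Finset ι) : Set Ω := {ω | ∀ i, ω ∈ B i ↔ i ∈ s}

theorem atom_mem [Fintype ι] [DecidableEq ι] (h𝒜 : IsSetAlgebra 𝒜) (hB : ∀ i, B i ∈ 𝒜)
    (s : Finset ι) : atom B s ∈ 𝒜 := by
  have : atom B s = ⋂ i ∈ Finset.univ, if i ∈ s then B i else (B i)ᶜ := by
    ext ω
    simp only [atom, Set.mem_ofPred_eq, Set.mem_iInter, Finset.mem_univ, true_imp_iff]
    refine forall_congr' fun i => ?_
    split_ifs with hi <;> simp [hi]
  rw [this]
  refine h𝒜.biInter_mem _ fun i _ => ?_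
  split_ifs
  exacts [hB i, h𝒜.compl_mem (hB i)]

theorem pairwiseDisjoint_atom (S : Set (Finset ι)) : S.PairwiseDisjoint (atom B) :=
  fun _ _ _ _ hst => Set.disjoint_left.2 fun _ hs ht =>
    hst (Finset.ext fun i => (hs i).symm.trans (ht i))

theorem biUnion_atom [Fintype ι] [DecidableEq ι] (i : ι) :
    ⋃ s ∈ Finset.univ.filter (i ∈ ·), atom B s = B i := by
  classical
  ext ω
  simp only [Set.mem_iUnion, Finset.mem_filter, Finset.mem_univ, true_and, exists_prop]
  refine ⟨fun ⟨s, hi, hω⟩ => (hω i).2 hi, fun hω => ⟨Finset.univ.filter (ω ∈ B ·), ?_, ?_⟩⟩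
  · simpa using hω
  · intro j; simp

theorem sum_indicator_of_mem_atom [Fintype ι] [DecidableEq ι] (c : ι → ℝ) {s : Finset ι}
    {ω : Ω} (hω : ω ∈ atom B s) :
    ∑ i, c i * (B i).indicator (fun _ => (1 : ℝ)) ω = ∑ i ∈ s, c i := by
  classical
  have hω : ∀ i, ω ∈ B i ↔ i ∈ s := hω
  simp [Set.indicator_apply, hω, Finset.sum_ite_mem]

theorem sum_mul_apply_eq_sum_atom [Fintype ι] [DecidableEq ι] (hm : IsFinitelyAdditiveOn 𝒜 m)
    (h𝒜 : IsSetAlgebra 𝒜) (hB : ∀ i, B i ∈ 𝒜) (c : ι → ℝ) :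
    ∑ i, c i * m (B i) = ∑ s, (∑ i ∈ s, c i) * m (atom B s) := by
  have hmB : ∀ i, m (B i) = ∑ s, if i ∈ s then m (atom B s) else 0 := fun i => by
    rw [← biUnion_atom B i, hm.apply_biUnion h𝒜 _ (fun s _ => atom_mem B h𝒜 hB s)
      (pairwiseDisjoint_atom B _), Finset.sum_filter]
  simp only [hmB, Finset.mul_sum, Finset.sum_mul]
  rw [Finset.sum_comm]
  refine Finset.sum_congr rfl fun s _ => ?_
  simp [mul_ite, Finset.sum_ite_mem]

end Atoms

section SimpleIntegral

variable {ι κ : Type*} [Fintype ι] [Fintype κ]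

theorem sum_mul_apply_nonneg (hm : IsFinitelyAdditiveOn 𝒜 m) (h𝒜 : IsSetAlgebra 𝒜)
    (hm0 : ∀ A ∈ 𝒜, 0 ≤ m A) {B : ι → Set Ω} (hB : ∀ i, B i ∈ 𝒜) {c : ι → ℝ}
    (hc : ∀ ω, 0 ≤ ∑ i, c i * (B i).indicator (fun _ => (1 : ℝ)) ω) :
    0 ≤ ∑ i, c i * m (B i) := by
  classical
  rw [sum_mul_apply_eq_sum_atom B hm h𝒜 hB c]
  refine Finset.sum_nonneg fun s _ => ?_
  rcases (atom B s).eq_empty_or_nonempty with hs | ⟨ω, hω⟩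
  · simp [hs, hm.apply_empty h𝒜]
  · exact mul_nonneg (sum_indicator_of_mem_atom B c hω ▸ hc ω) (hm0 _ (atom_mem B h𝒜 hB s))

theorem sum_mul_apply_mono (hm : IsFinitelyAdditiveOn 𝒜 m) (h𝒜 : IsSetAlgebra 𝒜)
    (hm0 : ∀ A ∈ 𝒜, 0 ≤ m A) {B : ι → Set Ω} (hB : ∀ i, B i ∈ 𝒜) {c : ι → ℝ}
    {D : κ → Set Ω} (hD : ∀ j, D j ∈ 𝒜) {d : κ → ℝ}
    (hle : ∀ ω, ∑ i, c i * (B i).indicator (fun _ => (1 : ℝ)) ω ≤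
      ∑ j, d j * (D j).indicator (fun _ => (1 : ℝ)) ω) :
    ∑ i, c i * m (B i) ≤ ∑ j, d j * m (D j) := by
  have := sum_mul_apply_nonneg hm h𝒜 hm0 (B := Sum.elim D B) (c := Sum.elim d (-c))
    (Sum.forall.2 ⟨hD, hB⟩) fun ω => by simpa [Fintype.sum_sum_type] using hle ω
  simpa [Fintype.sum_sum_type] using this

theorem mul_apply_add_mul_apply_compl_le (hm : IsFinitelyAdditiveOn 𝒜 m)
    (h𝒜 : IsSetAlgebra 𝒜) (hm0 : ∀ A ∈ 𝒜, 0 ≤ m A) {g : Ω → ℝ} {a b : ℝ} {A : Set Ω}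
    (hA : A ∈ 𝒜) (hgA : ∀ ω ∈ A, a ≤ g ω) (hgAc : ∀ ω ∉ A, b ≤ g ω)
    {B : ι → Set Ω} (hB : ∀ i, B i ∈ 𝒜) {c : ι → ℝ}
    (hdom : ∀ ω, g ω ≤ ∑ i, c i * (B i).indicator (fun _ => (1 : ℝ)) ω) :
    a * m A + b * m Aᶜ ≤ ∑ i, c i * m (B i) := by
  have hle : ∀ ω, ∑ i, ![a, b] i * (![A, Aᶜ] i).indicator (fun _ => (1 : ℝ)) ω ≤
      ∑ i, c i * (B i).indicator (fun _ => (1 : ℝ)) ω := fun ω => by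
    refine le_trans ?_ (hdom ω)
    by_cases hω : ω ∈ A
    · simpa [hω] using hgA ω hω
    · simpa [hω] using hgAc ω hω
  simpa using sum_mul_apply_mono hm h𝒜 hm0 (Fin.forall_fin_two.2 ⟨hA, h𝒜.compl_mem hA⟩) hB hle

end SimpleIntegral

noncomputable def upperIntegral (𝒜 : Set (Set Ω)) (m : Set Ω → ℝ) (g : Ω → ℝ) : ℝ :=
  sInf {r | ∃ (n : ℕ) (B : Fin n → Set Ω) (c : Fin n → ℝ), (∀ i, B i ∈ 𝒜) ∧
    (∀ ω, g ω ≤ ∑ i, c i * (B i).indicator (fun _ => (1 : ℝ)) ω) ∧ r = ∑ i, c i * m (B i)}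

theorem le_upperIntegral (huniv : Set.univ ∈ 𝒜) {g : Ω → ℝ} {M : ℝ} (hgM : ∀ ω, g ω ≤ M)
    {a : ℝ} (ha : ∀ (n : ℕ) (B : Fin n → Set Ω) (c : Fin n → ℝ), (∀ i, B i ∈ 𝒜) →
      (∀ ω, g ω ≤ ∑ i, c i * (B i).indicator (fun _ => (1 : ℝ)) ω) → a ≤ ∑ i, c i * m (B i)) :
    a ≤ upperIntegral 𝒜 m g := by
  refine le_csInf ⟨M * m Set.univ, 1, fun _ => Set.univ, fun _ => M, fun _ => huniv, ?_, ?_⟩ ?_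
  · simpa using hgM
  · simp
  · rintro _ ⟨n, B, c, hB, hdom, rfl⟩
    exact ha n B c hB hdom

variable {X : Type*} [MetricSpace X]

def IsMCover (𝒜 : Set (Set Ω)) (m : Set Ω → ℝ) (f : Ω → X) (K : Set X) : Prop :=
  ∀ ε > 0, ∀ δ > 0, ∃ A ∈ 𝒜, 1 - δ < m A ∧ Set.MapsTo f A (Metric.thickening ε K)

namespace IsMCover

variable {f : Ω → X} {K : Set X}

theorem nonempty (hK : IsMCover 𝒜 m f K) (hm : IsFinitelyAdditiveOn 𝒜 m)
    (h𝒜 : IsSetAlgebra 𝒜) : K.Nonempty := by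
  rw [Set.nonempty_iff_ne_empty]
  rintro rfl
  obtain ⟨A, -, hmA, hfA⟩ := hK 1 one_pos 1 one_pos
  have hA : A = ∅ := Set.eq_empty_of_forall_notMem fun ω hω => by simpa using hfA hω
  rw [hA, hm.apply_empty h𝒜] at hmA
  simp at hmA

theorem sInf_image_le_sum_mul_apply {ι : Type*} [Fintype ι] (hK : IsMCover 𝒜 m f K)
    (hm : IsFinitelyAdditiveOn 𝒜 m) (h𝒜 : IsSetAlgebra 𝒜) (hm0 : ∀ A ∈ 𝒜, 0 ≤ m A)
    (hone : m Set.univ = 1) {h : X → ℝ} (huc : UniformContinuous h) {b : ℝ}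
    (hb : ∀ x, b ≤ h x) {B : ι → Set Ω} (hB : ∀ i, B i ∈ 𝒜) {c : ι → ℝ}
    (hdom : ∀ ω, h (f ω) ≤ ∑ i, c i * (B i).indicator (fun _ => (1 : ℝ)) ω) :
    sInf (h '' K) ≤ ∑ i, c i * m (B i) := by
  set L := sInf (h '' K)
  have hbdd : BddBelow (h '' K) := ⟨b, Set.forall_mem_image.2 fun x _ => hb x⟩
  have hbL : b ≤ L :=
    le_csInf ((hK.nonempty hm h𝒜).image h) (Set.forall_mem_image.2 fun x _ => hb x)
  refine le_of_forall_pos_le_add fun ε hε => ?_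
  obtain ⟨η, hη, hhη⟩ := Metric.uniformContinuous_iff.1 huc (ε / 2) (by positivity)
  set δ := ε / 2 / (L - b + 1)
  obtain ⟨A, hA, hmA, hfA⟩ := hK η hη δ (by positivity)
  have hLA : ∀ ω ∈ A, L - ε / 2 ≤ h (f ω) := fun ω hω => by
    obtain ⟨z, hz, hdist⟩ := Metric.mem_thickening_iff.1 (hfA hω)
    have hLz : L ≤ h z := csInf_le hbdd (Set.mem_image_of_mem h hz)
    have hhz := hhη hdist
    rw [Real.dist_eq] at hhz
    linarith [(abs_lt.1 hhz).1]
  have hsum := mul_apply_add_mul_apply_compl_le hm h𝒜 hm0 hA hLA (fun ω _ => hb (f ω)) hB hdom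
  have hmAc : m A + m Aᶜ = 1 := hone ▸ hm.apply_add_apply_compl h𝒜 hA
  have hmAc0 : 0 ≤ m Aᶜ := hm0 _ (h𝒜.compl_mem hA)
  have hLbδ : (L - b) * δ ≤ ε / 2 := by
    rw [mul_div_assoc', div_le_iff₀ (by linarith)]
    nlinarith
  rw [show m A = 1 - m Aᶜ by linarith] at hsum
  linarith [mul_le_mul_of_nonneg_left (show m Aᶜ ≤ δ by linarith) (sub_nonneg.2 hbL),
    mul_nonneg hε.le hmAc0]

end IsMCover

end

/-- Key estimate in the proof of Theorem 3.2: if `K` is an `m`-cover of `f` (for every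
`ε, δ > 0` there is `A ∈ 𝒜` with `m(A) > 1 − δ` and `f[A]` inside the `ε`-neighborhood
of `K`) and `h` is bounded and uniformly continuous, then the upper finitely additive
integral of `h ∘ f` (infimum of the integrals of dominating `𝒜`-simple functions) is at
least `inf_{z ∈ K} h(z)`. -/
theorem stmt14 {Ω X : Type*} [MetricSpace X] (𝒜 : Set (Set Ω)) (m : Set Ω → ℝ)
    (huniv : Set.univ ∈ 𝒜) (hcompl : ∀ A ∈ 𝒜, Aᶜ ∈ 𝒜)
    (hunion : ∀ A ∈ 𝒜, ∀ B ∈ 𝒜, A ∪ B ∈ 𝒜)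
    (hnonneg : ∀ A ∈ 𝒜, 0 ≤ m A) (hone : m Set.univ = 1)
    (hadd : ∀ A ∈ 𝒜, ∀ B ∈ 𝒜, Disjoint A B → m (A ∪ B) = m A + m B)
    (f : Ω → X) (h : X → ℝ) (M : ℝ) (hbd : ∀ x, |h x| ≤ M)
    (huc : ∀ ε : ℝ, 0 < ε → ∃ δ : ℝ, 0 < δ ∧ ∀ x y : X, dist x y < δ → |h x - h y| < ε)
    (K : Set X)
    (hcover : ∀ ε : ℝ, 0 < ε → ∀ δ : ℝ, 0 < δ →
      ∃ A ∈ 𝒜, 1 - δ < m A ∧ ∀ ω ∈ A, ∃ z ∈ K, dist (f ω) z < ε) :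
    sInf (h '' K) ≤
      sInf {r | ∃ (n : ℕ) (B : Fin n → Set Ω) (c : Fin n → ℝ),
        (∀ i, B i ∈ 𝒜) ∧
        (∀ ω, h (f ω) ≤ ∑ i, c i * (B i).indicator (fun _ => (1 : ℝ)) ω) ∧
        r = ∑ i, c i * m (B i)} := by
  have h𝒜 : IsSetAlgebra 𝒜 :=
    ⟨by simpa using hcompl _ huniv, hcompl, fun _ _ hs ht => hunion _ hs _ ht⟩
  have hUC : UniformContinuous h := Metric.uniformContinuous_iff.2 fun ε hε =>
    (huc ε hε).imp fun _ ⟨hδ, hh⟩ =>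
      ⟨hδ, fun {x y} hxy => by simpa [Real.dist_eq] using hh x y hxy⟩
  have hK : IsMCover 𝒜 m f K := fun ε hε δ hδ => (hcover ε hε δ hδ).imp
    fun _ ⟨hA, hmA, hfA⟩ => ⟨hA, hmA, fun ω hω => Metric.mem_thickening_iff.2 (hfA ω hω)⟩
  exact le_upperIntegral (g := h ∘ f) huniv (fun ω => le_of_abs_le (hbd (f ω)))
    fun _ _ _ hB hdom => hK.sInf_image_le_sum_mul_apply hadd h𝒜 hnonneg hone hUC
      (fun x => neg_le_of_abs_le (hbd x)) hB hdom
end
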